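/- With α := u_α/s₂ and β := u_β/s₂, there exist R ∈ SO(3) and a unit vector n = (n₁, 0, n₃) ∈ ℝ³ (second component zero) such that Rᵀ U_α R = α S + (1−α) n⊗n; likewise there exist R' ∈ SO(3) and a unit vector m = (m₁, 0, m₃) ∈ ℝ³ such that R'ᵀ U_β R' = β S + (1−β) m⊗m. (Proposition 3.2(iii), existence form.) -/

import Mathlib

open Matrix Set

noncomputable section

/-- `R` is a real 3×3 rotation matrix (element of SO(3)). -/
def IsSO3 (R : Matrix (Fin 3) (Fin 3) ℝ) : Prop := Rᵀ * R = 1 ∧ R.det = 1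

/-- The rank-one matrix `n ⊗ n = (nᵢ nⱼ)`. -/
def outer (n : Fin 3 → ℝ) : Matrix (Fin 3) (Fin 3) ℝ := Matrix.vecMulVec n n

/-- `n` is a unit vector of `ℝ³`. -/
def unitVec (n : Fin 3 → ℝ) : Prop := n 0 ^ 2 + n 1 ^ 2 + n 2 ^ 2 = 1

/-- `α₋(F,G) = max(g₁/f₂, g₂/f₃)`. -/
def alphaMinus (f1 f2 f3 g1 g2 g3 : ℝ) : ℝ := max (g1 / f2) (g2 / f3)

/-- `α₊(F,G) = min(g₁/f₁, g₂/f₂, g₃/f₃)`. -/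
def alphaPlus (f1 f2 f3 g1 g2 g3 : ℝ) : ℝ := min (g1 / f1) (min (g2 / f2) (g3 / f3))

/-- `β₋(F,G) = max(g₁/f₁, g₂/f₂, g₃/f₃)`. -/
def betaMinus (f1 f2 f3 g1 g2 g3 : ℝ) : ℝ := max (g1 / f1) (max (g2 / f2) (g3 / f3))

/-- `β₊(F,G) = min(g₂/f₁, g₃/f₂)`. -/
def betaPlus (f1 f2 f3 g1 g2 g3 : ℝ) : ℝ := min (g2 / f1) (g3 / f2)

/-- `A(F,G) = ([α₋,α₊] ∪ [β₋,β₊]) \ {1}` in terms of the ordered eigenvalues. -/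
def setA (f1 f2 f3 g1 g2 g3 : ℝ) : Set ℝ :=
  (Set.Icc (alphaMinus f1 f2 f3 g1 g2 g3) (alphaPlus f1 f2 f3 g1 g2 g3) ∪
    Set.Icc (betaMinus f1 f2 f3 g1 g2 g3) (betaPlus f1 f2 f3 g1 g2 g3)) \ {1}

/-- Second elementary symmetric invariant `i₂(M) = ((tr M)² − tr(M²))/2`. -/
def i2 (M : Matrix (Fin 3) (Fin 3) ℝ) : ℝ := (Matrix.trace M ^ 2 - Matrix.trace (M * M)) / 2

/-- Third elementary symmetric invariant `i₃(M) = det M`. -/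
def i3 (M : Matrix (Fin 3) (Fin 3) ℝ) : ℝ := M.det

/-- `η(λ,t) = λ/(λ + t(1−λ))`. -/
def etaFun (lam t : ℝ) : ℝ := lam / (lam + t * (1 - lam))

/-- The one-parameter family `M(t) = η(λ,t) F + (1 − η(λ,t)) n⊗n`. -/
def Mcurve (F : Matrix (Fin 3) (Fin 3) ℝ) (n : Fin 3 → ℝ) (lam t : ℝ) :
    Matrix (Fin 3) (Fin 3) ℝ :=
  etaFun lam t • F + (1 - etaFun lam t) • outer n

/-- The quadratic `b(x) = 6 s₂ x² + (s₁s₃ − 3s₂ − 4s₂²) x + 2 s₂²`. -/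
def bpoly (s1 s2 s3 x : ℝ) : ℝ :=
  6 * s2 * x ^ 2 + (s1 * s3 - 3 * s2 - 4 * s2 ^ 2) * x + 2 * s2 ^ 2

/-! Conjugating `diag(p, α s₂, q)` by a rotation about the second axis produces every symmetric
matrix of the shape `[[a, 0, b], [0, α s₂, 0], [b, 0, d]]` whose `(1,3)`-block has eigenvalues
`p < q`. For `n = (√(1 - t), 0, √t)` the `(1,3)`-block of `α S + (1 - α) n ⊗ n` has trace
independent of `t` and determinant affine in `t`; at `t = 0` (resp. `t = 1`) its determinant
minus `p q` is `-(α s₃ - p)(α s₃ - q)` (resp. `-(α s₁ - p)(α s₁ - q)`), so a suitable `t ∈ [0, 1]`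
exists as soon as one of `α s₁, α s₃` lies in `[p, q]` and the other does not. For `U_α` and `U_β`
this interlacing amounts to `u_α < s₂ / (2 s₂ + s₃)` and `s₂ / (2 s₂ + s₁) < u_β`, which hold
because `b` is negative at both points, so they lie strictly between its roots. -/

lemma quadratic_eq_mul_sub_mul_sub {a b c u v : ℝ} (huv : u ≠ v)
    (hu : a * u ^ 2 + b * u + c = 0) (hv : a * v ^ 2 + b * v + c = 0) (x : ℝ) :
    a * x ^ 2 + b * x + c = a * (x - u) * (x - v) := by
  have hsum : a * (u + v) + b = 0 :=
    (mul_eq_zero.mp (by linear_combination hu - hv : (u - v) * (a * (u + v) + b) = 0)).resolve_left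
      (sub_ne_zero.mpr huv)
  linear_combination hu + (x - u) * hsum

lemma mem_Ioo_of_quadratic_neg {a b c u v x : ℝ} (ha : 0 < a) (huv : u < v)
    (hu : a * u ^ 2 + b * u + c = 0) (hv : a * v ^ 2 + b * v + c = 0)
    (hx : a * x ^ 2 + b * x + c < 0) : x ∈ Ioo u v := by
  rw [quadratic_eq_mul_sub_mul_sub huv.ne hu hv] at hx
  have hneg : (x - u) * (x - v) < 0 := by nlinarith
  rcases mul_neg_iff.mp hneg with ⟨hxu, hxv⟩ | ⟨hxu, hxv⟩
  · exact ⟨by linarith, by linarith⟩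
  · linarith

lemma bpoly_comm (s1 s2 s3 x : ℝ) : bpoly s1 s2 s3 x = bpoly s3 s2 s1 x := by
  rw [bpoly, bpoly, mul_comm s1]

lemma bpoly_div_two_mul_add_neg {s1 s2 s3 : ℝ} (hs2 : 0 < s2) (hs3 : 0 < s3)
    (hsum : s1 + s2 + s3 = 1) (hs : (s3 - s2) * (s1 - s2) < 0) :
    bpoly s1 s2 s3 (s2 / (2 * s2 + s3)) < 0 := by
  set x := s2 / (2 * s2 + s3)
  have hx : x * (2 * s2 + s3) = s2 := div_mul_cancel₀ _ (by linarith)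
  have h : bpoly s1 s2 s3 x * (2 * s2 + s3) ^ 2 = s2 * s3 * ((s3 - s2) * (s1 - s2)) := by
    rw [bpoly]
    linear_combination (6 * s2 * (x * (2 * s2 + s3) + s2) +
      (s1 * s3 - 3 * s2 - 4 * s2 ^ 2) * (2 * s2 + s3)) * hx + 3 * s2 ^ 2 * s3 * hsum
  have hneg : s2 * s3 * ((s3 - s2) * (s1 - s2)) < 0 := mul_neg_of_pos_of_neg (by positivity) hs
  nlinarith [sq_nonneg (2 * s2 + s3)]

lemma exists_mem_Icc_mul_one_sub_add_mul_eq_zero {x y : ℝ} (h : x * y ≤ 0) :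
    ∃ t ∈ Icc (0 : ℝ) 1, x * (1 - t) + y * t = 0 := by
  have hcont : ContinuousOn (fun t : ℝ => x * (1 - t) + y * t) (uIcc 0 1) := by fun_prop
  have h0 : (0 : ℝ) ∈ uIcc x y := by
    rcases mul_nonpos_iff.mp h with ⟨hx, hy⟩ | ⟨hx, hy⟩
    · exact mem_uIcc.mpr (Or.inr ⟨hy, hx⟩)
    · exact mem_uIcc.mpr (Or.inl ⟨hx, hy⟩)
  obtain ⟨t, ht, ht0⟩ := intermediate_value_uIcc hcont (by simpa using h0)
  exact ⟨t, by simpa using ht, ht0⟩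

lemma exists_sq_eq_sq_eq_mul_eq {x y z : ℝ} (hx : 0 ≤ x) (hz : 0 ≤ z) (h : y ^ 2 = x * z) :
    ∃ c s : ℝ, c ^ 2 = x ∧ s ^ 2 = z ∧ c * s = y := by
  rcases hx.eq_or_lt with rfl | hx
  · exact ⟨0, √z, by simp, Real.sq_sqrt hz, by simpa [eq_comm] using h⟩
  · have hsx : √x ≠ 0 := (Real.sqrt_pos.mpr hx).ne'
    refine ⟨√x, y / √x, Real.sq_sqrt hx.le, ?_, by field_simp⟩
    rw [div_pow, Real.sq_sqrt hx.le, h]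
    field_simp

lemma exists_rotation_conj_diagonal_two {a b d p q : ℝ} (hpq : p < q) (htr : a + d = p + q)
    (hdet : a * d - b ^ 2 = p * q) :
    ∃ c s : ℝ, c ^ 2 + s ^ 2 = 1 ∧ c ^ 2 * p + s ^ 2 * q = a ∧ s ^ 2 * p + c ^ 2 * q = d ∧
      c * s * (q - p) = b := by
  have hqp : q - p ≠ 0 := sub_ne_zero.mpr hpq.ne'
  have hb : (q - a) * (a - p) = b ^ 2 := by linear_combination hdet - a * htr
  have hpa : p ≤ a := by nlinarith [sq_nonneg b]
  have haq : a ≤ q := by nlinarith [sq_nonneg b]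
  obtain ⟨c, s, hc, hs, hcs⟩ := exists_sq_eq_sq_eq_mul_eq (x := (q - a) / (q - p))
    (y := b / (q - p)) (z := (a - p) / (q - p))
    (div_nonneg (sub_nonneg.mpr haq) (by linarith))
    (div_nonneg (sub_nonneg.mpr hpa) (by linarith))
    (by rw [div_pow, ← hb]; field_simp)
  refine ⟨c, s, ?_, ?_, ?_, ?_⟩
  · rw [hc, hs]; field_simp; ring
  · rw [hc, hs]; field_simp; ring
  · rw [hc, hs]; field_simp; linear_combination (p - q) * htr
  · rw [hcs]; field_simp

def rotAboutY (c s : ℝ) : Matrix (Fin 3) (Fin 3) ℝ := !![c, 0, -s; 0, 1, 0; s, 0, c]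

lemma isSO3_rotAboutY {c s : ℝ} (h : c ^ 2 + s ^ 2 = 1) : IsSO3 (rotAboutY c s) := by
  constructor
  · ext i j
    fin_cases i <;> fin_cases j <;>
      simp [rotAboutY, Matrix.mul_apply, Fin.sum_univ_three] <;>
      first | ring1 | linear_combination h
  · simp [rotAboutY, Matrix.det_fin_three]
    linear_combination h

lemma rotAboutY_transpose_mul_diagonal_mul (c s p u q : ℝ) :
    (rotAboutY c s)ᵀ * diagonal ![p, u, q] * rotAboutY c s =
      !![c ^ 2 * p + s ^ 2 * q, 0, c * s * (q - p);
        0, u, 0;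
        c * s * (q - p), 0, s ^ 2 * p + c ^ 2 * q] := by
  ext i j
  fin_cases i <;> fin_cases j <;> simp [rotAboutY, Matrix.mul_apply, Fin.sum_univ_three] <;> ring

lemma smul_diagonal_add_smul_outer (α e s1 s2 s3 n1 n3 : ℝ) :
    α • diagonal ![s1, s2, s3] + e • outer ![n1, 0, n3] =
      !![α * s1 + e * n1 ^ 2, 0, e * (n1 * n3);
        0, α * s2, 0;
        e * (n1 * n3), 0, α * s3 + e * n3 ^ 2] := by
  ext i j
  fin_cases i <;> fin_cases j <;> simp [outer, sq, mul_comm]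

lemma exists_isSO3_conj_diagonal_eq_smul_add_smul_outer {α s1 s2 s3 p q : ℝ} (hpq : p < q)
    (htr : α * s1 + α * s3 + (1 - α) = p + q)
    (hinterlace : (α * s1 - p) * (α * s1 - q) * ((α * s3 - p) * (α * s3 - q)) ≤ 0) :
    ∃ (R : Matrix (Fin 3) (Fin 3) ℝ) (n : Fin 3 → ℝ), IsSO3 R ∧ unitVec n ∧ n 1 = 0 ∧
      Rᵀ * diagonal ![p, α * s2, q] * R = α • diagonal ![s1, s2, s3] + (1 - α) • outer n := by
  obtain ⟨t, ⟨ht0, ht1⟩, ht⟩ := exists_mem_Icc_mul_one_sub_add_mul_eq_zero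
    (x := -((α * s3 - p) * (α * s3 - q))) (y := -((α * s1 - p) * (α * s1 - q)))
    (by linarith)
  have hn1 : √(1 - t) ^ 2 = 1 - t := Real.sq_sqrt (by linarith)
  have hn3 : √t ^ 2 = t := Real.sq_sqrt ht0
  obtain ⟨c, s, hcs, ha, hd, hb⟩ := exists_rotation_conj_diagonal_two
    (a := α * s1 + (1 - α) * √(1 - t) ^ 2) (b := (1 - α) * (√(1 - t) * √t))
    (d := α * s3 + (1 - α) * √t ^ 2) hpq
    (by rw [hn1, hn3]; linear_combination htr)
    (by linear_combination ht + (α * s3 * (1 - t) + α * s1 * t) * htr +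
      α * (1 - α) * (s3 * hn1 + s1 * hn3))
  refine ⟨rotAboutY c s, ![√(1 - t), 0, √t], isSO3_rotAboutY hcs, ?_, rfl, ?_⟩
  · simp only [unitVec, Matrix.cons_val, hn1, hn3]
    ring
  · rw [rotAboutY_transpose_mul_diagonal_mul, smul_diagonal_add_smul_outer, ha, hd, hb]

lemma exists_conj_Ualpha {s1 s2 s3 u : ℝ} (hs2 : 0 < s2) (hs12 : s1 < s2) (hs23 : s2 < s3)
    (hsum : s1 + s2 + s3 = 1) (hu0 : 0 < u) (hu3 : u < 1 / 3) (hu : u < s2 / (2 * s2 + s3)) :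
    ∃ (R : Matrix (Fin 3) (Fin 3) ℝ) (n : Fin 3 → ℝ), IsSO3 R ∧ unitVec n ∧ n 1 = 0 ∧
      Rᵀ * diagonal ![u, u, 1 - 2 * u] * R =
        (u / s2) • diagonal ![s1, s2, s3] + (1 - u / s2) • outer n := by
  have hαK : u / s2 * (2 * s2 + s3) < 1 := by
    rw [div_mul_eq_mul_div, div_lt_one hs2]
    exact (lt_div_iff₀ (by linarith)).mp hu
  set α := u / s2
  have hα : α * s2 = u := div_mul_cancel₀ _ hs2.ne'
  have hαpos : 0 < α := div_pos hu0 hs2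
  have h1 : α * s1 < u := hα ▸ mul_lt_mul_of_pos_left hs12 hαpos
  have h3 : u ≤ α * s3 := hα ▸ mul_le_mul_of_nonneg_left hs23.le hαpos.le
  have h3' : α * s3 ≤ 1 - 2 * u := by linarith
  have h := exists_isSO3_conj_diagonal_eq_smul_add_smul_outer (α := α) (s1 := s1)
    (s2 := s2) (s3 := s3) (p := u) (q := 1 - 2 * u)
    (by linarith) (by linear_combination α * hsum - hα)
    (mul_nonpos_of_nonneg_of_nonpos (mul_pos_of_neg_of_neg (by linarith) (by linarith)).le
      (mul_nonpos_of_nonneg_of_nonpos (by linarith) (by linarith)))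
  rwa [hα] at h

lemma exists_conj_Ubeta {s1 s2 s3 u : ℝ} (hs1 : 0 < s1) (hs12 : s1 < s2) (hs23 : s2 < s3)
    (hsum : s1 + s2 + s3 = 1) (hu3 : 1 / 3 < u) (hu : s2 / (2 * s2 + s1) < u) :
    ∃ (R : Matrix (Fin 3) (Fin 3) ℝ) (n : Fin 3 → ℝ), IsSO3 R ∧ unitVec n ∧ n 1 = 0 ∧
      Rᵀ * diagonal ![1 - 2 * u, u, u] * R =
        (u / s2) • diagonal ![s1, s2, s3] + (1 - u / s2) • outer n := by
  have hs2 : 0 < s2 := hs1.trans hs12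
  have hαK : 1 < u / s2 * (2 * s2 + s1) := by
    rw [div_mul_eq_mul_div, one_lt_div hs2]
    exact (div_lt_iff₀ (by linarith)).mp hu
  set α := u / s2
  have hα : α * s2 = u := div_mul_cancel₀ _ hs2.ne'
  have hαpos : 0 < α := div_pos (by linarith) hs2
  have h1 : α * s1 ≤ u := hα ▸ mul_le_mul_of_nonneg_left hs12.le hαpos.le
  have h1' : 1 - 2 * u ≤ α * s1 := by linarith
  have h3 : u < α * s3 := hα ▸ mul_lt_mul_of_pos_left hs23 hαpos
  have h := exists_isSO3_conj_diagonal_eq_smul_add_smul_outer (α := α) (s1 := s1)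
    (s2 := s2) (s3 := s3) (p := 1 - 2 * u) (q := u)
    (by linarith) (by linear_combination α * hsum - hα)
    (mul_nonpos_of_nonpos_of_nonneg (mul_nonpos_of_nonneg_of_nonpos (by linarith) (by linarith))
      (mul_pos (by linarith) (by linarith)).le)
  rwa [hα] at h

theorem statement5_general (s1 s2 s3 ua ub : ℝ)
    (hs1 : 0 < s1) (hs12 : s1 < s2) (hs23 : s2 < s3) (hsum : s1 + s2 + s3 = 1)
    (hua : bpoly s1 s2 s3 ua = 0) (hub : bpoly s1 s2 s3 ub = 0)
    (hua1 : s1 ≤ ua) (hua2 : ua < 1 / 3) (hub1 : 1 / 3 < ub) :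
    (∃ (R : Matrix (Fin 3) (Fin 3) ℝ) (n : Fin 3 → ℝ),
      IsSO3 R ∧ unitVec n ∧ n 1 = 0 ∧
      Rᵀ * Matrix.diagonal ![ua, ua, 1 - 2 * ua] * R =
        (ua / s2) • Matrix.diagonal ![s1, s2, s3] + (1 - ua / s2) • outer n) ∧
    (∃ (R' : Matrix (Fin 3) (Fin 3) ℝ) (m : Fin 3 → ℝ),
      IsSO3 R' ∧ unitVec m ∧ m 1 = 0 ∧
      R'ᵀ * Matrix.diagonal ![1 - 2 * ub, ub, ub] * R' =
        (ub / s2) • Matrix.diagonal ![s1, s2, s3] + (1 - ub / s2) • outer m) := by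
  have hs2 : 0 < s2 := hs1.trans hs12
  have hab : ua < ub := hua2.trans hub1
  have hα := mem_Ioo_of_quadratic_neg (by positivity) hab hua hub
    (bpoly_div_two_mul_add_neg hs2 (hs2.trans hs23) hsum
      (mul_neg_of_pos_of_neg (by linarith) (by linarith)))
  have hβ := mem_Ioo_of_quadratic_neg (by positivity) hab hua hub
    (bpoly_comm s1 s2 s3 _ ▸ bpoly_div_two_mul_add_neg hs2 hs1 (by linarith)
      (mul_neg_of_neg_of_pos (by linarith) (by linarith)))
  exact ⟨exists_conj_Ualpha hs2 hs12 hs23 hsum (hs1.trans_le hua1) hua2 hα.1,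
    exists_conj_Ubeta hs1 hs12 hs23 hsum hub1 hβ.2⟩

theorem statement5 (s1 s2 s3 ua ub : ℝ)
    (hs1 : 0 < s1) (hs12 : s1 < s2) (hs23 : s2 < s3) (hsum : s1 + s2 + s3 = 1)
    (hua : bpoly s1 s2 s3 ua = 0) (hub : bpoly s1 s2 s3 ub = 0)
    (huamin : ∀ x : ℝ, bpoly s1 s2 s3 x = 0 → ua ≤ x)
    (hubmax : ∀ x : ℝ, bpoly s1 s2 s3 x = 0 → x ≤ ub)
    (hua1 : s1 ≤ ua) (hua2 : ua < 1 / 3) (hub1 : 1 / 3 < ub) (hub2 : ub ≤ s3) :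
    (∃ (R : Matrix (Fin 3) (Fin 3) ℝ) (n : Fin 3 → ℝ),
      IsSO3 R ∧ unitVec n ∧ n 1 = 0 ∧
      Rᵀ * Matrix.diagonal ![ua, ua, 1 - 2 * ua] * R =
        (ua / s2) • Matrix.diagonal ![s1, s2, s3] + (1 - ua / s2) • outer n) ∧
    (∃ (R' : Matrix (Fin 3) (Fin 3) ℝ) (m : Fin 3 → ℝ),
      IsSO3 R' ∧ unitVec m ∧ m 1 = 0 ∧
      R'ᵀ * Matrix.diagonal ![1 - 2 * ub, ub, ub] * R' =
        (ub / s2) • Matrix.diagonal ![s1, s2, s3] + (1 - ub / s2) • outer m) :=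
  statement5_general s1 s2 s3 ua ub hs1 hs12 hs23 hsum hua hub hua1 hua2 hub1
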